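/- Let I be a countable set, let p : I → [0,1] satisfy ∑_{i∈I} p_i = 1, let γ ∈ [0,1), let r ∈ ℝ, let N ≥ 1, and let θ, ψ : I → ℝ^N be functions with C := sup_{i∈I, 1≤j≤N} |θ_j(i) − ψ_j(i)| < ∞. Define the probability measures μ = ∑_{i∈I} p_i · (1/N) ∑_{j=1}^N δ_{r + γ·θ_j(i)} and ν = ∑_{i∈I} p_i · (1/N) ∑_{j=1}^N δ_{r + γ·ψ_j(i)} on ℝ. Then for every τ ∈ (0,1], |F_μ⁻¹(τ) − F_ν⁻¹(τ)| ≤ γ·C. -/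
import Mathlib


open MeasureTheory Set Filter
open scoped ENNReal Topology

/-- The CDF of a measure on ℝ: `F(y) = μ((-∞, y])`. -/
noncomputable def cdfFn (μ : Measure ℝ) (y : ℝ) : ℝ := (μ (Iic y)).toReal

/-- The quantile function (generalized inverse CDF): `F⁻¹(ω) = inf {y | ω ≤ F(y)}`. -/
noncomputable def quantileFn (μ : Measure ℝ) (ω : ℝ) : ℝ := sInf {y : ℝ | ω ≤ cdfFn μ y}

/-- The distributional Bellman backup of a quantile value distribution with atoms `θ j i`,
through a transition distribution `p`, deterministic reward `r` and discount `γ`: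
`∑ᵢ pᵢ (1/N) ∑ⱼ δ_{r + γ θ_j(i)}`. -/
noncomputable def backupMeasure {I : Type*} (p : I → ℝ) (r γ : ℝ) (N : ℕ)
    (θ : I → Fin N → ℝ) : Measure ℝ :=
  Measure.sum fun i : I =>
    ENNReal.ofReal (p i) • ((N : ℝ≥0∞)⁻¹ • ∑ j : Fin N, Measure.dirac (r + γ * θ i j))

section Aux

variable {I : Type*} [Countable I]

lemma backup_apply (p : I → ℝ) (r γ : ℝ) (N : ℕ) (θ : I → Fin N → ℝ)
    {s : Set ℝ} (hs : MeasurableSet s) :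
    backupMeasure p r γ N θ s
      = ∑' i, ENNReal.ofReal (p i) *
          ((N : ℝ≥0∞)⁻¹ * ∑ j : Fin N, s.indicator 1 (r + γ * θ i j)) := by
  rw [backupMeasure, Measure.sum_apply _ hs]
  congr 1; funext i
  rw [Measure.smul_apply, Measure.smul_apply, Measure.finset_sum_apply]
  simp only [smul_eq_mul]
  congr 2
  exact Finset.sum_congr rfl fun j _ => Measure.dirac_apply' _ hs

lemma backup_univ (p : I → ℝ) (hp : ∀ i, 0 ≤ p i) (hsum : ∑' i, p i = 1)
    (r γ : ℝ) (N : ℕ) (hN : 1 ≤ N) (θ : I → Fin N → ℝ) :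
    backupMeasure p r γ N θ univ = 1 := by
  have hsummable : Summable p := by
    by_contra h
    rw [tsum_eq_zero_of_not_summable h] at hsum; norm_num at hsum
  rw [backup_apply _ _ _ _ _ MeasurableSet.univ]
  have hN0 : (N : ℝ≥0∞) ≠ 0 := by
    exact_mod_cast Nat.one_le_iff_ne_zero.mp hN
  simp only [indicator_univ, Pi.one_apply, Finset.sum_const, Finset.card_univ,
    Fintype.card_fin, nsmul_eq_mul, mul_one]
  rw [ENNReal.inv_mul_cancel hN0 (ENNReal.natCast_ne_top N)]
  simp only [mul_one]
  rw [← ENNReal.ofReal_tsum_of_nonneg hp hsummable, hsum, ENNReal.ofReal_one]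

lemma backup_Iic_le (p : I → ℝ) (r γ : ℝ) (N : ℕ)
    (θ ψ : I → Fin N → ℝ) (c : ℝ)
    (h : ∀ i j, r + γ * ψ i j ≤ r + γ * θ i j + c) (y : ℝ) :
    backupMeasure p r γ N θ (Iic y) ≤ backupMeasure p r γ N ψ (Iic (y + c)) := by
  rw [backup_apply _ _ _ _ _ measurableSet_Iic, backup_apply _ _ _ _ _ measurableSet_Iic]
  refine ENNReal.tsum_le_tsum fun i => ?_
  refine mul_le_mul_right (mul_le_mul_right (Finset.sum_le_sum fun j _ => ?_) _) _
  by_cases hij : r + γ * θ i j ≤ y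
  · have h2 : r + γ * ψ i j ≤ y + c := by
      have := h i j; linarith
    simp [Set.indicator_apply, mem_Iic, hij, h2]
  · simp [Set.indicator_apply, mem_Iic, hij]

lemma cdf_mono (μ : Measure ℝ) [IsFiniteMeasure μ] {y z : ℝ} (h : y ≤ z) :
    cdfFn μ y ≤ cdfFn μ z :=
  ENNReal.toReal_mono (measure_ne_top μ _) (measure_mono (Iic_subset_Iic.mpr h))

lemma quantile_set_bddBelow (μ : Measure ℝ) [IsFiniteMeasure μ] {τ : ℝ} (hτ : 0 < τ) :
    BddBelow {y : ℝ | τ ≤ cdfFn μ y} := by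
  have hiInter : (⋂ x : ℝ, Iic x) = (∅ : Set ℝ) := by
    ext x
    simp only [mem_iInter, mem_Iic, mem_empty_iff_false, iff_false, not_forall]
    exact ⟨x - 1, by linarith⟩
  have htend : Filter.Tendsto (fun x : ℝ => μ (Iic x)) Filter.atBot (𝓝 0) := by
    have h := tendsto_measure_iInter_atBot (μ := μ)
      (s := fun x : ℝ => Iic x) (fun x => measurableSet_Iic.nullMeasurableSet)
      (fun a b hab => Iic_subset_Iic.mpr hab) ⟨0, measure_ne_top μ _⟩
    rw [hiInter, measure_empty] at h
    exact h
  have hpos : (0 : ℝ≥0∞) < ENNReal.ofReal τ := ENNReal.ofReal_pos.mpr hτ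
  have hev : ∀ᶠ x in Filter.atBot, μ (Iic x) < ENNReal.ofReal τ :=
    htend.eventually_lt_const hpos
  obtain ⟨y₀, hy₀⟩ := hev.exists
  refine ⟨y₀, fun y hy => ?_⟩
  by_contra hlt
  push_neg at hlt
  have h1 : cdfFn μ y₀ < τ := by
    have := ENNReal.toReal_lt_of_lt_ofReal hy₀
    exact this
  have h2 : τ ≤ cdfFn μ y₀ := le_trans hy (cdf_mono μ hlt.le)
  linarith

lemma quantile_shift (μ ν : Measure ℝ) [IsFiniteMeasure μ] [IsFiniteMeasure ν]
    (c τ : ℝ) (hτ : 0 < τ)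
    (h : ∀ y, ν (Iic y) ≤ μ (Iic (y + c)))
    (hne : {y : ℝ | τ ≤ cdfFn ν y}.Nonempty) :
    quantileFn μ τ ≤ quantileFn ν τ + c := by
  have hsub : ∀ y ∈ {y : ℝ | τ ≤ cdfFn ν y}, y + c ∈ {y : ℝ | τ ≤ cdfFn μ y} := by
    intro y hy
    exact le_trans hy (ENNReal.toReal_mono (measure_ne_top μ _) (h y))
  have hbddμ : BddBelow {y : ℝ | τ ≤ cdfFn μ y} := quantile_set_bddBelow μ hτ
  have key : ∀ y ∈ {y : ℝ | τ ≤ cdfFn ν y}, quantileFn μ τ - c ≤ y := by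
    intro y hy
    have := csInf_le hbddμ (hsub y hy)
    unfold quantileFn
    linarith [this]
  have : quantileFn μ τ - c ≤ quantileFn ν τ := le_csInf hne key
  linarith

end Aux

/-- quantiles of the Bellman backups of two quantile value distributions differ
by at most `γ C`, where `C = sup_{i,j} |θ_j(i) - ψ_j(i)|`. -/
theorem quantile_backup_contraction
    (I : Type*) [Countable I] (p : I → ℝ) (hp : ∀ i, p i ∈ Set.Icc (0:ℝ) 1)
    (hsum : ∑' i, p i = 1) (γ : ℝ) (hγ : γ ∈ Set.Ico (0:ℝ) 1) (r : ℝ)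
    (N : ℕ) (hN : 1 ≤ N) (θ ψ : I → Fin N → ℝ)
    (hbdd : BddAbove (Set.range fun q : I × Fin N => |θ q.1 q.2 - ψ q.1 q.2|))
    (τ : ℝ) (hτ : τ ∈ Set.Ioc (0:ℝ) 1) :
    |quantileFn (backupMeasure p r γ N θ) τ - quantileFn (backupMeasure p r γ N ψ) τ|
      ≤ γ * ⨆ q : I × Fin N, |θ q.1 q.2 - ψ q.1 q.2| := by
  set C := ⨆ q : I × Fin N, |θ q.1 q.2 - ψ q.1 q.2| with hC
  have hp0 : ∀ i, 0 ≤ p i := fun i => (hp i).1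
  have hIne : Nonempty I := by
    by_contra h
    rw [not_nonempty_iff] at h
    rw [tsum_empty] at hsum
    norm_num at hsum
  have hFinNe : Nonempty (Fin N) := ⟨⟨0, hN⟩⟩
  have hCle : ∀ q : I × Fin N, |θ q.1 q.2 - ψ q.1 q.2| ≤ C := fun q => le_ciSup hbdd q
  have hC0 : 0 ≤ C := le_trans (abs_nonneg _) (hCle (Classical.arbitrary _))
  have hθψ : ∀ i j, r + γ * θ i j ≤ r + γ * ψ i j + γ * C := by
    intro i j
    have h1 : θ i j - ψ i j ≤ C := le_trans (le_abs_self _) (hCle (i, j))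
    nlinarith [hγ.1]
  have hψθ : ∀ i j, r + γ * ψ i j ≤ r + γ * θ i j + γ * C := by
    intro i j
    have h1 : ψ i j - θ i j ≤ C := le_trans (le_abs_self _) (by rw [abs_sub_comm]; exact hCle (i, j))
    nlinarith [hγ.1]
  set μ := backupMeasure p r γ N θ
  set ν := backupMeasure p r γ N ψ
  haveI : IsProbabilityMeasure μ := ⟨backup_univ p hp0 hsum r γ N hN θ⟩
  haveI : IsProbabilityMeasure ν := ⟨backup_univ p hp0 hsum r γ N hN ψ⟩
  have hμν : ∀ y, μ (Iic y) ≤ ν (Iic (y + γ * C)) := backup_Iic_le p r γ N θ ψ _ hψθ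
  have hνμ : ∀ y, ν (Iic y) ≤ μ (Iic (y + γ * C)) := backup_Iic_le p r γ N ψ θ _ hθψ
  by_cases hneν : {y : ℝ | τ ≤ cdfFn ν y}.Nonempty
  · have hneμ : {y : ℝ | τ ≤ cdfFn μ y}.Nonempty := by
      obtain ⟨y, hy⟩ := hneν
      exact ⟨y + γ * C, le_trans hy (ENNReal.toReal_mono (measure_ne_top μ _) (hνμ y))⟩
    have h1 := quantile_shift μ ν (γ * C) τ hτ.1 hνμ hneν
    have h2 := quantile_shift ν μ (γ * C) τ hτ.1 hμν hneμ
    rw [abs_le]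
    constructor <;> linarith
  · have hneμ : ¬ {y : ℝ | τ ≤ cdfFn μ y}.Nonempty := by
      intro ⟨y, hy⟩
      exact hneν ⟨y + γ * C, le_trans hy (ENNReal.toReal_mono (measure_ne_top ν _) (hμν y))⟩
    rw [not_nonempty_iff_eq_empty] at hneν hneμ
    unfold quantileFn
    rw [hneν, hneμ, Real.sInf_empty]
    simpa using mul_nonneg hγ.1 hC0
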